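/- Let U ⊆ F_q³ be a set of q² − 2 points that does not determine the points of C, with ∑_{u∈U} u = (0,0,0). If σ₂(Y,Z,W) factors in F_q[Y,Z,W] as a product of two polynomials of degree 1, then U is extendable, i.e. there exists v ∈ F_q³ \ U such that U ∪ {v} does not determine the points of C. -/

import Mathlib

/-- The dot product on `F³`. -/
def dot3 {F : Type*} [Field F] (u v : F × F × F) : F :=
  u.1 * v.1 + u.2.1 * v.2.1 + u.2.2 * v.2.2

/-- The nondegenerate quadratic form `Q(t₀,t₁,t₂) = t₁² − t₀t₂` defining the conic `C`. -/
def quadQ {F : Type*} [Field F] (t : F × F × F) : F :=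
  t.2.1 ^ 2 - t.1 * t.2.2

/-- `U` does not determine the points of the conic `C`:
`Q(u − u') ≠ 0` for all distinct `u, u' ∈ U`. -/
def NoDetermine {F : Type*} [Field F] (U : Finset (F × F × F)) : Prop :=
  ∀ u ∈ U, ∀ u' ∈ U, u ≠ u' → quadQ (u - u') ≠ 0

/-- The line at infinity `l(y,z,w)` meets the conic `C`. -/
def MeetsConic {F : Type*} [Field F] (v : F × F × F) : Prop :=
  ∃ t : F × F × F, t ≠ 0 ∧ quadQ t = 0 ∧ dot3 v t = 0

/-- `σ_i(y,z,w)`: the `i`-th elementary symmetric function of the multiset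
`{u·(y,z,w) : u ∈ U}`. -/
def sigmaU {F : Type*} [Field F] (U : Finset (F × F × F)) (v : F × F × F) (i : ℕ) : F :=
  (U.val.map (fun u => dot3 u v)).esymm i

/-- The linear form `u₀Y + u₁Z + u₂W` in `F[Y,Z,W]` associated to `u ∈ F³`. -/
noncomputable def linForm {F : Type*} [Field F] (u : F × F × F) : MvPolynomial (Fin 3) F :=
  MvPolynomial.C u.1 * MvPolynomial.X 0 + MvPolynomial.C u.2.1 * MvPolynomial.X 1 +
    MvPolynomial.C u.2.2 * MvPolynomial.X 2

/-- `σ_i(Y,Z,W)`: the `i`-th elementary symmetric polynomial of the multiset of linear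
forms `{u₀Y + u₁Z + u₂W : u ∈ U}`, as a polynomial in `F[Y,Z,W]`. -/
noncomputable def sigmaPoly {F : Type*} [Field F] (U : Finset (F × F × F)) (i : ℕ) :
    MvPolynomial (Fin 3) F :=
  (U.val.map linForm).esymm i

/-!
For a point `t` of `C`, projecting along `t` is injective on `U`: two points of `U` differing by a
multiple of `t` would determine `t`. So the image of `U` in `F³/⟨t⟩ ≅ F²` misses exactly two points,
which are `±A` because `∑ u = 0`. As `∑_{x ∈ F²} ℓ(x)² = 0` for every linear form `ℓ`, this gives
`σ₂(w) = (a · w)²` for `w ∈ t^⊥`, where `a` lifts `A`, and `U` misses the lines `±a + ⟨t⟩`.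

The degree-one factors of `σ₂` have no constant terms, as `σ₂` is even and vanishes at `0`. If the
two linear forms were not proportional, every point of `C` would lie in the plane they span, which
is impossible; so `σ₂(w) = (m · w)²` for some `m`. Comparing with the square on `t^⊥` forces
`m ≡ ±a` modulo `t` for every point `t` of `C`, hence no line through `m` in a direction of `C`
meets `U`, and `U ∪ {m}` still does not determine `C`.
-/

namespace Multiset

variable {R : Type*}

theorem esymm_cons_succ [CommSemiring R] (a : R) (s : Multiset R) (n : ℕ) :
    (a ::ₘ s).esymm (n + 1) = s.esymm (n + 1) + a * s.esymm n := by
  simp [esymm, powersetCard_cons, sum_map_mul_left]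

theorem esymm_one [CommSemiring R] (s : Multiset R) : s.esymm 1 = s.sum := by
  simp [esymm, powersetCard_one]

theorem two_mul_esymm_two [CommRing R] (s : Multiset R) :
    2 * s.esymm 2 = s.sum ^ 2 - (s.map (· ^ 2)).sum := by
  induction s using Multiset.induction with
  | empty => simp [esymm, powersetCard_zero_right]
  | cons a s ih =>
    rw [esymm_cons_succ, esymm_one, sum_cons, map_cons, sum_cons]
    linear_combination ih

end Multiset

theorem sum_univ_eq_zero_of_two_ne_zero {F M : Type*} [Field F] [AddCommGroup M] [Module F M]
    [Fintype M] (h2 : (2 : F) ≠ 0) : ∑ x : M, x = 0 := by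
  have hneg : ∑ x : M, x = -∑ x : M, x := by
    rw [← Finset.sum_neg_distrib]
    exact (Fintype.sum_equiv (Equiv.neg M) _ _ fun _ => rfl).symm
  have : (2 : F) • ∑ x : M, x = 0 := by
    rw [two_smul]; nth_rewrite 2 [hneg]; exact add_neg_cancel _
  exact (smul_eq_zero.mp this).resolve_left h2

theorem exists_compl_eq_pair_neg {F M : Type*} [Field F] [AddCommGroup M] [Module F M]
    [Fintype M] [DecidableEq M] (h2 : (2 : F) ≠ 0) {S : Finset M}
    (hcard : S.card + 2 = Fintype.card M) (hsum : ∑ x ∈ S, x = 0) :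
    ∃ A : M, A ≠ -A ∧ Sᶜ = {A, -A} := by
  have hcompl : Sᶜ.card = 2 := by rw [Finset.card_compl]; omega
  obtain ⟨A, B, hAB, hS⟩ := Finset.card_eq_two.mp hcompl
  have hB : B = -A := by
    have := Finset.sum_compl_add_sum S fun x => x
    rw [hS, Finset.sum_pair hAB, hsum, add_zero, sum_univ_eq_zero_of_two_ne_zero h2] at this
    exact eq_neg_of_add_eq_zero_right this
  exact ⟨A, hB ▸ hAB, hB ▸ hS⟩

theorem AddSubmonoid.forall_or_forall_of_mul_eq_zero {M R : Type*} [AddMonoid M] [Semiring R]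
    [NoZeroDivisors R] (S : AddSubmonoid M) (f g : M →+ R) (h : ∀ x ∈ S, f x * g x = 0) :
    (∀ x ∈ S, f x = 0) ∨ ∀ x ∈ S, g x = 0 := by
  by_contra! hfg
  obtain ⟨⟨x, hx, hfx⟩, ⟨y, hy, hgy⟩⟩ := hfg
  have hgx : g x = 0 := (mul_eq_zero.mp (h x hx)).resolve_left hfx
  have hfy : f y = 0 := (mul_eq_zero.mp (h y hy)).resolve_right hgy
  have hxy := h (x + y) (S.add_mem hx hy)
  rw [map_add, map_add, hgx, hfy, zero_add, add_zero] at hxy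
  exact mul_ne_zero hfx hgy hxy

theorem mul_eq_mul_of_mul_eq_sq {R : Type*} [CommRing R] [IsReduced R] {p q r s k l : R}
    (h₁ : p * r = k ^ 2) (h₂ : q * s = l ^ 2) (h₃ : (p + q) * (r + s) = (k + l) ^ 2) :
    p * s = q * r := by
  have h₄ : p * s + q * r = 2 * (k * l) := by linear_combination h₃ - h₁ - h₂
  have h₅ : (p * s - q * r) ^ 2 = 0 := by
    linear_combination (p * s + q * r + 2 * k * l) * h₄ - 4 * l ^ 2 * h₁ - 4 * (p * r) * h₂
  exact sub_eq_zero.mp (IsReduced.eq_zero _ ⟨2, h₅⟩)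

section FiniteField

variable {F : Type*} [Field F] [Fintype F]

theorem two_ne_zero_of_odd_card (hodd : Odd (Fintype.card F)) : (2 : F) ≠ 0 :=
  Ring.two_ne_zero fun hchar =>
    Nat.not_even_iff_odd.mpr hodd (Nat.even_iff.mpr (FiniteField.even_card_iff_char_two.mp hchar))

theorem sum_sq_linear_eq_zero (h2 : (2 : F) ≠ 0) (α β : F) :
    ∑ x : F × F, (α * x.1 + β * x.2) ^ 2 = 0 := by
  have hsum : ∑ x : F, x = 0 := sum_univ_eq_zero_of_two_ne_zero h2
  have hcard : (Fintype.card F : F) = 0 := FiniteField.cast_card_eq_zero F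
  have hexp : ∀ x : F × F, (α * x.1 + β * x.2) ^ 2
      = α ^ 2 * x.1 ^ 2 + 2 * α * β * x.1 * x.2 + β ^ 2 * x.2 ^ 2 := fun x => by ring
  simp only [hexp, Fintype.sum_prod_type, Finset.sum_add_distrib, ← Finset.mul_sum,
    Finset.sum_const, Finset.card_univ, nsmul_eq_mul, hcard]
  simp only [zero_mul, mul_zero, zero_add, add_zero]
  refine Finset.sum_eq_zero fun x _ => ?_
  rw [← Finset.mul_sum, hsum, mul_zero]

theorem sum_sq_linear_of_compl_eq_pair [DecidableEq F] (h2 : (2 : F) ≠ 0) {S : Finset (F × F)}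
    {A : F × F} (hA : A ≠ -A) (hS : Sᶜ = {A, -A}) (α β : F) :
    ∑ x ∈ S, (α * x.1 + β * x.2) ^ 2 = -(2 * (α * A.1 + β * A.2) ^ 2) := by
  have := Finset.sum_compl_add_sum S fun x : F × F => (α * x.1 + β * x.2) ^ 2
  rw [sum_sq_linear_eq_zero h2, hS, Finset.sum_pair hA] at this
  simp only [Prod.fst_neg, Prod.snd_neg] at this
  linear_combination this

end FiniteField

section Conic

variable {F : Type*} [Field F]

open MvPolynomial

@[simp] theorem dot3_add_left (u v w : F × F × F) : dot3 (u + v) w = dot3 u w + dot3 v w := by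
  simp only [dot3, Prod.fst_add, Prod.snd_add]; ring

@[simp] theorem dot3_sub_left (u v w : F × F × F) : dot3 (u - v) w = dot3 u w - dot3 v w := by
  simp only [dot3, Prod.fst_sub, Prod.snd_sub]; ring

@[simp] theorem dot3_neg_left (u w : F × F × F) : dot3 (-u) w = -dot3 u w := by
  simp only [dot3, Prod.fst_neg, Prod.snd_neg]; ring

@[simp] theorem dot3_smul_left (c : F) (u w : F × F × F) : dot3 (c • u) w = c * dot3 u w := by
  simp only [dot3, Prod.smul_fst, Prod.smul_snd, smul_eq_mul]; ring

@[simp] theorem dot3_zero_left (w : F × F × F) : dot3 0 w = 0 := by simp [dot3]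

theorem dot3_comm (u w : F × F × F) : dot3 u w = dot3 w u := by
  simp only [dot3]; ring

@[simp] theorem dot3_zero_right (u : F × F × F) : dot3 u 0 = 0 := by
  rw [dot3_comm, dot3_zero_left]

@[simp] theorem dot3_add_right (u v w : F × F × F) : dot3 w (u + v) = dot3 w u + dot3 w v := by
  rw [dot3_comm, dot3_add_left, dot3_comm u, dot3_comm v]

@[simp] theorem dot3_neg_right (u w : F × F × F) : dot3 u (-w) = -dot3 u w := by
  rw [dot3_comm, dot3_neg_left, dot3_comm]

@[simp] theorem dot3_smul_right (c : F) (u w : F × F × F) : dot3 u (c • w) = c * dot3 u w := by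
  rw [dot3_comm, dot3_smul_left, dot3_comm]

def dot3AddHom (u : F × F × F) : (F × F × F) →+ F :=
  AddMonoidHom.mk' (dot3 u) fun v w => dot3_add_right v w u

@[simp] theorem dot3AddHom_apply (u w : F × F × F) : dot3AddHom u w = dot3 u w := rfl

theorem sum_dot3 {ι : Type*} (s : Finset ι) (f : ι → F × F × F) (w : F × F × F) :
    ∑ i ∈ s, dot3 (f i) w = dot3 (∑ i ∈ s, f i) w :=
  (map_sum (AddMonoidHom.mk' (fun u => dot3 u w) fun u v => dot3_add_left u v w) f s).symm

theorem eq_zero_of_forall_dot3_eq_zero {v : F × F × F} (h : ∀ w, dot3 v w = 0) : v = 0 := by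
  have h₀ := h (1, 0, 0)
  have h₁ := h (0, 1, 0)
  have h₂ := h (0, 0, 1)
  simp only [dot3, mul_one, mul_zero, add_zero, zero_add] at h₀ h₁ h₂
  exact Prod.ext h₀ (Prod.ext h₁ h₂)

theorem quadQ_smul (c : F) (t : F × F × F) : quadQ (c • t) = c ^ 2 * quadQ t := by
  simp only [quadQ, Prod.smul_fst, Prod.smul_snd, smul_eq_mul]; ring

theorem quadQ_neg (t : F × F × F) : quadQ (-t) = quadQ t := by
  simpa using quadQ_smul (-1) t

theorem two_mul_sigmaU (U : Finset (F × F × F)) (w : F × F × F) :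
    2 * sigmaU U w 2 = (∑ u ∈ U, dot3 u w) ^ 2 - ∑ u ∈ U, dot3 u w ^ 2 := by
  rw [sigmaU, Multiset.two_mul_esymm_two, Multiset.map_map]
  rfl

theorem sigmaU_smul (U : Finset (F × F × F)) (c : F) (w : F × F × F) :
    sigmaU U (c • w) 2 = c ^ 2 * sigmaU U w 2 := by
  rw [sigmaU, sigmaU, ← smul_eq_mul, Multiset.pow_smul_esymm, Multiset.map_map]
  simp only [Function.comp_def, dot3_smul_right, smul_eq_mul]

theorem sigmaU_zero (U : Finset (F × F × F)) : sigmaU U 0 2 = 0 := by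
  simpa using sigmaU_smul U 0 0

theorem sigmaU_neg (U : Finset (F × F × F)) (w : F × F × F) : sigmaU U (-w) 2 = sigmaU U w 2 := by
  simpa using sigmaU_smul U (-1) w

theorem eval_linForm (u w : F × F × F) :
    MvPolynomial.eval ![w.1, w.2.1, w.2.2] (linForm u) = dot3 u w := by
  simp [linForm, dot3]

theorem eval_sigmaPoly (U : Finset (F × F × F)) (i : ℕ) (w : F × F × F) :
    MvPolynomial.eval ![w.1, w.2.1, w.2.2] (sigmaPoly U i) = sigmaU U w i := by
  rw [sigmaPoly, sigmaU, Finset.esymm_map_val, Finset.esymm_map_val, map_sum]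
  simp only [map_prod, eval_linForm]

theorem linForm_zero : linForm (0 : F × F × F) = 0 := by simp [linForm]

theorem exists_eq_C_add_linForm {f : MvPolynomial (Fin 3) F} (hf : f.totalDegree = 1) :
    ∃ c : F, ∃ v : F × F × F, v ≠ 0 ∧ f = C c + linForm v := by
  have hlin : homogeneousComponent 1 f ∈ Submodule.span F (Set.range (X : Fin 3 → _)) := by
    rw [← homogeneousSubmodule_one_eq_span_X]
    exact homogeneousComponent_mem 1 f
  obtain ⟨c, hc⟩ := (Submodule.mem_span_range_iff_exists_fun F).mp hlin
  have hdecomp : f = C (coeff 0 f) + linForm (c 0, c 1, c 2) := by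
    conv_lhs => rw [← sum_homogeneousComponent f, hf]
    simp [Finset.sum_range_succ, homogeneousComponent_zero, ← hc, Fin.sum_univ_three, linForm,
      smul_eq_C_mul]
  refine ⟨coeff 0 f, (c 0, c 1, c 2), fun hv => ?_, hdecomp⟩
  rw [hv, linForm_zero, add_zero] at hdecomp
  rw [hdecomp, totalDegree_C] at hf
  exact zero_ne_one hf

theorem eq_zero_of_sigmaU_eq_mul (h2 : (2 : F) ≠ 0) {U : Finset (F × F × F)} {a b : F}
    {v₁ v₂ : F × F × F} (hv₁ : v₁ ≠ 0) (hv₂ : v₂ ≠ 0)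
    (hσ : ∀ w, sigmaU U w 2 = (a + dot3 v₁ w) * (b + dot3 v₂ w)) : a = 0 ∧ b = 0 := by
  have hab : a * b = 0 := by simpa [sigmaU_zero] using (hσ 0).symm
  have hlin : ∀ w, a * dot3 v₂ w + b * dot3 v₁ w = 0 := by
    intro w
    have heven := hσ (-w)
    rw [sigmaU_neg, hσ w, dot3_neg_right, dot3_neg_right] at heven
    have : (2 : F) * (a * dot3 v₂ w + b * dot3 v₁ w) = 0 := by linear_combination heven
    exact (mul_eq_zero.mp this).resolve_left h2
  rcases mul_eq_zero.mp hab with ha | hb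
  · refine ⟨ha, by_contra fun hb => hv₁ (eq_zero_of_forall_dot3_eq_zero fun w => ?_)⟩
    simpa [ha, hb] using hlin w
  · refine ⟨by_contra fun ha => hv₂ (eq_zero_of_forall_dot3_eq_zero fun w => ?_), hb⟩
    simpa [ha, hb] using hlin w

theorem exists_sigmaU_eq_mul (h2 : (2 : F) ≠ 0) {U : Finset (F × F × F)}
    (hred : ∃ f g : MvPolynomial (Fin 3) F,
      f.totalDegree = 1 ∧ g.totalDegree = 1 ∧ sigmaPoly U 2 = f * g) :
    ∃ v₁ v₂ : F × F × F, v₁ ≠ 0 ∧ ∀ w, sigmaU U w 2 = dot3 v₁ w * dot3 v₂ w := by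
  obtain ⟨f, g, hf, hg, hfg⟩ := hred
  obtain ⟨a, v₁, hv₁, rfl⟩ := exists_eq_C_add_linForm hf
  obtain ⟨b, v₂, hv₂, rfl⟩ := exists_eq_C_add_linForm hg
  have hσ : ∀ w, sigmaU U w 2 = (a + dot3 v₁ w) * (b + dot3 v₂ w) := fun w => by
    rw [← eval_sigmaPoly, hfg, map_mul, map_add, map_add, eval_C, eval_C, eval_linForm,
      eval_linForm]
  obtain ⟨rfl, rfl⟩ := eq_zero_of_sigmaU_eq_mul h2 hv₁ hv₂ hσ
  exact ⟨v₁, v₂, hv₁, fun w => by simpa using hσ w⟩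

/-- `w₁, w₂` span `t^⊥`, and `u ↦ (u · w₁, u · w₂)` identifies `F³ / ⟨t⟩` with `F²`. -/
structure IsPerpBasis (t w₁ w₂ : F × F × F) : Prop where
  perp_left : dot3 t w₁ = 0
  perp_right : dot3 t w₂ = 0
  ker : ∀ u, dot3 u w₁ = 0 → dot3 u w₂ = 0 → ∃ μ : F, u = μ • t
  surj : ∀ s₁ s₂ : F, ∃ u, dot3 u w₁ = s₁ ∧ dot3 u w₂ = s₂
  span : ∀ w, dot3 t w = 0 → ∃ α β : F, w = α • w₁ + β • w₂

theorem isPerpBasis_of_fst_ne_zero {t : F × F × F} (ht : t.1 ≠ 0) :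
    IsPerpBasis t (t.2.1, -t.1, 0) (t.2.2, 0, -t.1) where
  perp_left := by simp only [dot3]; ring
  perp_right := by simp only [dot3]; ring
  ker u h₁ h₂ := by
    refine ⟨u.1 / t.1, Prod.ext ?_ (Prod.ext ?_ ?_)⟩ <;>
      simp only [dot3, Prod.smul_fst, Prod.smul_snd, smul_eq_mul] at h₁ h₂ ⊢ <;>
      field_simp
    · linear_combination -h₁
    · linear_combination -h₂
  surj s₁ s₂ := ⟨(0, -s₁ / t.1, -s₂ / t.1), by simp only [dot3]; field_simp; ring,
    by simp only [dot3]; field_simp; ring⟩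
  span w hw := by
    refine ⟨-w.2.1 / t.1, -w.2.2 / t.1, Prod.ext ?_ (Prod.ext ?_ ?_)⟩ <;>
      simp only [dot3, Prod.fst_add, Prod.snd_add, Prod.smul_fst, Prod.smul_snd,
        smul_eq_mul] at hw ⊢ <;>
      field_simp
    · linear_combination hw
    · ring
    · ring

theorem isPerpBasis_third_axis {c : F} (hc : c ≠ 0) :
    IsPerpBasis (0, 0, c) (1, 0, 0) (0, 1, 0) where
  perp_left := by simp [dot3]
  perp_right := by simp [dot3]
  ker u h₁ h₂ := ⟨u.2.2 / c, by
    simp only [dot3, mul_one, mul_zero, add_zero, zero_add] at h₁ h₂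
    ext <;> simp [h₁, h₂, hc]⟩
  surj s₁ s₂ := ⟨(s₁, s₂, 0), by simp [dot3], by simp [dot3]⟩
  span w hw := ⟨w.1, w.2.1, by
    simp only [dot3, zero_mul, zero_add, mul_eq_zero, hc, false_or] at hw
    ext <;> simp [hw]⟩

theorem exists_isPerpBasis {t : F × F × F} (ht : t ≠ 0) (hQt : quadQ t = 0) :
    ∃ w₁ w₂, IsPerpBasis t w₁ w₂ := by
  by_cases ht₀ : t.1 = 0
  · obtain ⟨t₀, t₁, t₂⟩ := t
    simp only at ht₀
    subst ht₀
    have ht₁ : t₁ = 0 := by simpa [quadQ] using hQt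
    subst ht₁
    have ht₂ : t₂ ≠ 0 := by rintro rfl; exact ht rfl
    exact ⟨_, _, isPerpBasis_third_axis ht₂⟩
  · exact ⟨_, _, isPerpBasis_of_fst_ne_zero ht₀⟩

theorem IsPerpBasis.exists_eq_smul {t w₁ w₂ u : F × F × F} (hb : IsPerpBasis t w₁ w₂)
    (hu : ∀ w, dot3 t w = 0 → dot3 u w = 0) : ∃ μ : F, u = μ • t :=
  hb.ker u (hu _ hb.perp_left) (hu _ hb.perp_right)

theorem NoDetermine.insert [DecidableEq F] {U : Finset (F × F × F)} (hU : NoDetermine U)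
    {v : F × F × F} (hv : ∀ u ∈ U, u ≠ v → quadQ (v - u) ≠ 0) : NoDetermine (insert v U) := by
  intro x hx y hy hne
  rcases Finset.mem_insert.mp hx with rfl | hxU <;> rcases Finset.mem_insert.mp hy with rfl | hyU
  · exact absurd rfl hne
  · exact hv y hyU (Ne.symm hne)
  · rw [← neg_sub, quadQ_neg]; exact hv x hxU hne
  · exact hU x hxU y hyU hne

theorem exists_conic_perp_dot3_ne_zero {v : F × F × F} (hv : v ≠ 0) :
    ∃ t, t ≠ 0 ∧ quadQ t = 0 ∧ ∃ w, dot3 t w = 0 ∧ dot3 v w ≠ 0 := by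
  by_contra! h
  have h₂ := h (0, 0, 1) (by simp) (by simp [quadQ])
  have h₀ := h (1, 0, 0) (by simp) (by simp [quadQ])
  refine hv (Prod.ext ?_ (Prod.ext ?_ ?_))
  · simpa [dot3] using h₂ (1, 0, 0) (by simp [dot3])
  · simpa [dot3] using h₂ (0, 1, 0) (by simp [dot3])
  · simpa [dot3] using h₀ (0, 0, 1) (by simp [dot3])

theorem not_forall_conic_mem_span_pair (v₁ v₂ : F × F × F) :
    ¬ ∀ t : F × F × F, t ≠ 0 → quadQ t = 0 → t ∈ Submodule.span F {v₁, v₂} := by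
  intro h
  set P := Submodule.span F {v₁, v₂}
  have e₀ : ((1, 0, 0) : F × F × F) ∈ P := h _ (by simp) (by simp [quadQ])
  have e₂ : ((0, 0, 1) : F × F × F) ∈ P := h _ (by simp) (by simp [quadQ])
  have e₁ : ((0, 1, 0) : F × F × F) ∈ P := by
    have := P.sub_mem (P.sub_mem (h (1, 1, 1) (by simp) (by simp [quadQ])) e₀) e₂
    convert this using 1
    ext <;> simp
  have htop : P = ⊤ := eq_top_iff.mpr fun x _ => by
    have hx : x = x.1 • ((1, 0, 0) : F × F × F) + x.2.1 • (0, 1, 0) + x.2.2 • (0, 0, 1) := by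
      ext <;> simp
    rw [hx]
    exact P.add_mem (P.add_mem (P.smul_mem _ e₀) (P.smul_mem _ e₁)) (P.smul_mem _ e₂)
  have h3 : Module.finrank F P = 3 := by
    rw [htop, finrank_top]; simp [Module.finrank_prod]
  have hle : Module.finrank F P ≤ 2 := by
    classical
    have := finrank_span_finset_le_card (R := F) ({v₁, v₂} : Finset (F × F × F))
    rw [Finset.coe_pair] at this
    exact this.trans Finset.card_le_two
  omega

theorem IsPerpBasis.exists_combination_eq_smul {t w₁ w₂ v₁ v₂ a : F × F × F}
    (hb : IsPerpBasis t w₁ w₂) (h : ∀ w, dot3 t w = 0 → dot3 v₁ w * dot3 v₂ w = dot3 a w ^ 2) :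
    ∃ c₁ c₂ : F, (c₁ ≠ 0 ∨ c₂ ≠ 0) ∧ ∃ ν : F, c₁ • v₁ + c₂ • v₂ = ν • t := by
  have hw₁₂ : dot3 t (w₁ + w₂) = 0 := by simp [hb.perp_left, hb.perp_right]
  have hdet := mul_eq_mul_of_mul_eq_sq (h w₁ hb.perp_left) (h w₂ hb.perp_right)
    (by simpa using h _ hw₁₂)
  have hker : ∀ c₁ c₂ : F, c₁ * dot3 v₁ w₁ + c₂ * dot3 v₂ w₁ = 0 →
      c₁ * dot3 v₁ w₂ + c₂ * dot3 v₂ w₂ = 0 → ∃ ν : F, c₁ • v₁ + c₂ • v₂ = ν • t :=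
    fun c₁ c₂ h₁ h₂ => hb.ker _ (by simpa using h₁) (by simpa using h₂)
  by_cases h₁ : dot3 v₂ w₁ ≠ 0 ∨ dot3 v₁ w₁ ≠ 0
  · exact ⟨_, _, h₁.imp id neg_ne_zero.mpr, hker _ (-dot3 v₁ w₁) (by ring)
      (by linear_combination -hdet)⟩
  by_cases h₂ : dot3 v₂ w₂ ≠ 0 ∨ dot3 v₁ w₂ ≠ 0
  · exact ⟨_, _, h₂.imp id neg_ne_zero.mpr, hker _ (-dot3 v₁ w₂) (by linear_combination hdet)
      (by ring)⟩
  simp only [not_or, not_not] at h₁ h₂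
  exact ⟨1, 0, Or.inl one_ne_zero, hker 1 0 (by simp [h₁.2]) (by simp [h₂.2])⟩

end Conic

/-- `q² − 2` points not determining `C`, two short of the maximum `q²` (projection along a point
of `C` is injective on such a set), normalized by `∑ u = 0`. -/
structure DeficiencyTwo {F : Type*} [Field F] [Fintype F] (U : Finset (F × F × F)) : Prop where
  card_eq : U.card = Fintype.card F ^ 2 - 2
  noDetermine : NoDetermine U
  sum_eq_zero : ∑ u ∈ U, u = 0

namespace DeficiencyTwo

variable {F : Type*} [Field F] [Fintype F] [DecidableEq F] {U : Finset (F × F × F)}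

theorem exists_sigmaU_eq_sq_on_perp (hU : DeficiencyTwo U) (h2 : (2 : F) ≠ 0)
    {t w₁ w₂ : F × F × F} (hQt : quadQ t = 0) (hb : IsPerpBasis t w₁ w₂) :
    ∃ a : F × F × F, (∀ u ∈ U, ∀ μ : F, u ≠ a + μ • t ∧ u ≠ -a + μ • t) ∧
      ∀ w, dot3 t w = 0 → sigmaU U w 2 = dot3 a w ^ 2 := by
  let φ : F × F × F → F × F := fun u => (dot3 u w₁, dot3 u w₂)
  have hinj : Set.InjOn φ U := by
    intro u hu u' hu' he
    by_contra hne
    simp only [φ, Prod.mk.injEq] at he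
    obtain ⟨μ, hμ⟩ := hb.ker (u - u') (by simp [he.1]) (by simp [he.2])
    exact hU.noDetermine u hu u' hu' hne (by rw [hμ, quadQ_smul, hQt, mul_zero])
  have hcard : (U.image φ).card + 2 = Fintype.card (F × F) := by
    have hq : 2 ^ 2 ≤ Fintype.card F ^ 2 := Nat.pow_le_pow_left Fintype.one_lt_card 2
    rw [Finset.card_image_of_injOn hinj, hU.card_eq, Fintype.card_prod, ← sq]
    omega
  have hsum : ∑ x ∈ U.image φ, x = 0 := by
    rw [Finset.sum_image hinj]
    ext <;> simp [φ, Prod.fst_sum, Prod.snd_sum, sum_dot3, hU.sum_eq_zero]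
  obtain ⟨A, hA, hS⟩ := exists_compl_eq_pair_neg h2 hcard hsum
  obtain ⟨a, ha₁, ha₂⟩ := hb.surj A.1 A.2
  have hmiss : ∀ u ∈ U, φ u ∉ ({A, -A} : Finset (F × F)) := fun u hu hmem =>
    Finset.mem_compl.mp (hS ▸ hmem) (Finset.mem_image_of_mem φ hu)
  refine ⟨a, fun u hu μ => ⟨?_, ?_⟩, fun w hw => ?_⟩
  · rintro rfl
    refine hmiss _ hu (Finset.mem_insert.mpr (Or.inl ?_))
    ext <;> simp [φ, hb.perp_left, hb.perp_right, ha₁, ha₂]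
  · rintro rfl
    refine hmiss _ hu (Finset.mem_insert.mpr (Or.inr (Finset.mem_singleton.mpr ?_)))
    ext <;> simp [φ, hb.perp_left, hb.perp_right, ha₁, ha₂]
  · obtain ⟨α, β, rfl⟩ := hb.span w hw
    have hsq : ∑ u ∈ U, dot3 u (α • w₁ + β • w₂) ^ 2 = -(2 * dot3 a (α • w₁ + β • w₂) ^ 2) := by
      have := sum_sq_linear_of_compl_eq_pair h2 hA hS α β
      rw [Finset.sum_image hinj] at this
      simpa [φ, ha₁, ha₂] using this
    have h2σ := two_mul_sigmaU U (α • w₁ + β • w₂)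
    rw [sum_dot3, hU.sum_eq_zero, dot3_zero_left, hsq] at h2σ
    exact mul_left_cancel₀ h2 (by linear_combination h2σ)

theorem mem_span_or_exists_eq_smul (hU : DeficiencyTwo U) (h2 : (2 : F) ≠ 0)
    {v₁ v₂ : F × F × F} (hv₁ : v₁ ≠ 0) (hσ : ∀ w, sigmaU U w 2 = dot3 v₁ w * dot3 v₂ w)
    {t : F × F × F} (ht : t ≠ 0) (hQt : quadQ t = 0) :
    t ∈ Submodule.span F {v₁, v₂} ∨ ∃ c : F, v₂ = c • v₁ := by
  obtain ⟨w₁, w₂, hb⟩ := exists_isPerpBasis ht hQt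
  obtain ⟨a, -, ha⟩ := hU.exists_sigmaU_eq_sq_on_perp h2 hQt hb
  obtain ⟨c₁, c₂, hc, ν, hν⟩ := hb.exists_combination_eq_smul fun w hw => by rw [← hσ, ha w hw]
  by_cases hν₀ : ν = 0
  · right
    rw [hν₀, zero_smul] at hν
    have hc₂ : c₂ ≠ 0 := by
      rintro rfl
      rw [zero_smul, add_zero, smul_eq_zero] at hν
      exact hc.elim (fun hc₁ => hν.elim hc₁ hv₁) fun h => h rfl
    refine ⟨-c₁ / c₂, ?_⟩
    rw [div_eq_inv_mul, mul_smul, neg_smul, ← eq_neg_of_add_eq_zero_right hν, smul_smul,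
      inv_mul_cancel₀ hc₂, one_smul]
  · left
    refine Submodule.mem_span_pair.mpr ⟨ν⁻¹ * c₁, ν⁻¹ * c₂, ?_⟩
    rw [mul_smul, mul_smul, ← smul_add, hν, smul_smul, inv_mul_cancel₀ hν₀, one_smul]

theorem exists_sigmaU_eq_sq (hU : DeficiencyTwo U) (h2 : (2 : F) ≠ 0) {v₁ v₂ : F × F × F}
    (hv₁ : v₁ ≠ 0) (hσ : ∀ w, sigmaU U w 2 = dot3 v₁ w * dot3 v₂ w) :
    ∃ m : F × F × F, ∀ w, sigmaU U w 2 = dot3 m w ^ 2 := by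
  obtain ⟨c, rfl⟩ : ∃ c : F, v₂ = c • v₁ := by
    by_contra hne
    exact not_forall_conic_mem_span_pair v₁ v₂ fun t ht hQt =>
      (hU.mem_span_or_exists_eq_smul h2 hv₁ hσ ht hQt).resolve_right hne
  obtain ⟨t, ht, hQt, w, htw, hvw⟩ := exists_conic_perp_dot3_ne_zero hv₁
  obtain ⟨w₁, w₂, hb⟩ := exists_isPerpBasis ht hQt
  obtain ⟨a, -, ha⟩ := hU.exists_sigmaU_eq_sq_on_perp h2 hQt hb
  -- `c` is a square: `σ₂` is a square on `t^⊥`, where `v₁ ·` does not vanish identically.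
  have hc : c * dot3 v₁ w ^ 2 = dot3 a w ^ 2 := by
    rw [← ha w htw, hσ, dot3_smul_left]; ring
  refine ⟨(dot3 a w / dot3 v₁ w) • v₁, fun w' => ?_⟩
  rw [hσ, dot3_smul_left, dot3_smul_left, mul_pow, div_pow, ← hc]
  field_simp

theorem avoids_of_sigmaU_eq_sq (hU : DeficiencyTwo U) (h2 : (2 : F) ≠ 0) {m : F × F × F}
    (hm : ∀ w, sigmaU U w 2 = dot3 m w ^ 2) {t : F × F × F} (ht : t ≠ 0) (hQt : quadQ t = 0) :
    ∀ u ∈ U, ∀ μ : F, u ≠ m + μ • t := by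
  obtain ⟨w₁, w₂, hb⟩ := exists_isPerpBasis ht hQt
  obtain ⟨a, hmiss, ha⟩ := hU.exists_sigmaU_eq_sq_on_perp h2 hQt hb
  have hprod : ∀ w ∈ AddMonoidHom.mker (dot3AddHom t),
      dot3AddHom (m - a) w * dot3AddHom (m + a) w = 0 := fun w hw => by
    have := ha w hw
    rw [hm] at this
    simp only [dot3AddHom_apply, dot3_sub_left, dot3_add_left]
    linear_combination this
  rcases AddSubmonoid.forall_or_forall_of_mul_eq_zero _ _ _ hprod with hsub | hadd
  · obtain ⟨ν, hν⟩ := hb.exists_eq_smul hsub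
    intro u hu μ he
    exact (hmiss u hu (ν + μ)).1 (by rw [he, add_smul, ← hν]; abel)
  · obtain ⟨ν, hν⟩ := hb.exists_eq_smul hadd
    intro u hu μ he
    exact (hmiss u hu (ν + μ)).2 (by rw [he, add_smul, ← hν]; abel)

theorem extendable_of_sigmaU_eq_sq (hU : DeficiencyTwo U) (h2 : (2 : F) ≠ 0)
    {m : F × F × F} (hm : ∀ w, sigmaU U w 2 = dot3 m w ^ 2) :
    m ∉ U ∧ NoDetermine (insert m U) := by
  have havoid : ∀ t, t ≠ 0 → quadQ t = 0 → ∀ u ∈ U, ∀ μ : F, u ≠ m + μ • t :=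
    fun _ => hU.avoids_of_sigmaU_eq_sq h2 hm
  refine ⟨fun hmU => havoid (1, 0, 0) (by simp) (by simp [quadQ]) m hmU 0 (by simp), ?_⟩
  refine hU.noDetermine.insert fun u hu hne hQ => ?_
  exact havoid (m - u) (sub_ne_zero.mpr hne.symm) hQ u hu (-1) (by simp)

end DeficiencyTwo

theorem stmt_9_general {p h : ℕ} (hodd : Odd p)
    {F : Type*} [Field F] [Fintype F] [DecidableEq F]
    (hcard : Fintype.card F = p ^ h)
    (U : Finset (F × F × F))
    (hUcard : U.card = Fintype.card F ^ 2 - 2)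
    (hU : NoDetermine U)
    (hsum : ∑ u ∈ U, u = 0)
    (hred : ∃ f g : MvPolynomial (Fin 3) F,
      f.totalDegree = 1 ∧ g.totalDegree = 1 ∧ sigmaPoly U 2 = f * g) :
    ∃ v : F × F × F, v ∉ U ∧ NoDetermine (insert v U) := by
  have h2 : (2 : F) ≠ 0 := two_ne_zero_of_odd_card (hcard ▸ hodd.pow)
  have hU' : DeficiencyTwo U := ⟨hUcard, hU, hsum⟩
  obtain ⟨v₁, v₂, hv₁, hσ⟩ := exists_sigmaU_eq_mul h2 hred
  obtain ⟨m, hm⟩ := hU'.exists_sigmaU_eq_sq h2 hv₁ hσ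
  exact ⟨m, hU'.extendable_of_sigmaU_eq_sq h2 hm⟩

theorem stmt_9 {p h : ℕ} (hp : p.Prime) (hodd : Odd p) (hh : 1 ≤ h)
    {F : Type*} [Field F] [Fintype F] [DecidableEq F]
    (hcard : Fintype.card F = p ^ h)
    (U : Finset (F × F × F))
    (hUcard : U.card = Fintype.card F ^ 2 - 2)
    (hU : NoDetermine U)
    (hsum : ∑ u ∈ U, u = 0)
    (hred : ∃ f g : MvPolynomial (Fin 3) F,
      f.totalDegree = 1 ∧ g.totalDegree = 1 ∧ sigmaPoly U 2 = f * g) :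
    ∃ v : F × F × F, v ∉ U ∧ NoDetermine (insert v U) :=
  stmt_9_general hodd hcard U hUcard hU hsum hred
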